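/- Let G : [0,∞) → ℝ^{m×m} be continuous with G(t) symmetric, positive semidefinite, all row sums zero, and ‖G(t)‖ ≤ R for all t ≥ 0, where ‖·‖ is the operator norm. Fix h > 0 and for k = 0,1,2,… set β_k = min{ xᵀ·((1/h)∫_{kh}^{(k+1)h} G(τ) dτ)·x : ‖x‖ = 1, Σ_i x_i = 0 }. If there exists β̂ > 0 with β_k ≥ β̂ for all k, then consensus is reached exponentially: there exist C, α > 0 such that every solution x of ẋ = −G(t)x satisfies ‖x(t) − x̄·𝟙‖ ≤ C·e^{−αt}·‖x(0) − x̄·𝟙‖ for all t ≥ 0, where x̄ = (1/m)Σ_i x_i(0) and 𝟙 = (1,…,1)ᵀ. -/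

import Mathlib

/-!
Subtracting the mean `x̄ 𝟙` gives again a solution `y`, now with `∑ yᵢ = 0` (zero row and column
sums), and `V = ‖y‖²` has `V' = -2 yᵀ G y ≤ 0`. On a window `[a, a + h]` put
`D = ∫ yᵀ G y = (V a - V (a + h)) / 2`. Since `0 ≤ G ≤ R` gives `‖G y‖² ≤ R yᵀ G y`, the drift
`y a - y t = ∫ G y` has `‖y a - y t‖² ≤ h R D`; splitting `y a = y t + (y a - y t)` in the quadratic
form of `G t` then yields `h β̂ V a ≤ ∫ (y a)ᵀ G (y a) ≤ 2 (1 + (h R)²) D`. So every window shrinks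
`V` by the fixed factor `1 + h β̂ / (1 + (h R)²)`, which is exponential decay.
-/

open scoped BigOperators
open Matrix

open Set Real intervalIntegral
open MeasureTheory (volume ae_restrict_of_forall_mem)

section QuadraticForm

variable {n : Type*} [Fintype n]

lemma Matrix.IsSymm.dotProduct_mulVec_comm {M : Matrix n n ℝ} (hM : M.IsSymm) (u v : n → ℝ) :
    u ⬝ᵥ M *ᵥ v = v ⬝ᵥ M *ᵥ u := by
  rw [dotProduct_mulVec, ← mulVec_transpose, hM.eq, dotProduct_comm]

lemma add_dotProduct_mulVec_add_le {M : Matrix n n ℝ} (hM : ∀ v, 0 ≤ v ⬝ᵥ M *ᵥ v)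
    (u v : n → ℝ) : (u + v) ⬝ᵥ M *ᵥ (u + v) ≤ 2 * (u ⬝ᵥ M *ᵥ u + v ⬝ᵥ M *ᵥ v) := by
  have := hM (u - v)
  simp only [mulVec_add, mulVec_sub, dotProduct_add, add_dotProduct, dotProduct_sub,
    sub_dotProduct] at this ⊢
  linarith

lemma dotProduct_mulVec_le_of_sum_sq_mulVec_le {M : Matrix n n ℝ} {R : ℝ} (hR : 0 ≤ R)
    (hM : ∀ v, ∑ i, (M *ᵥ v) i ^ 2 ≤ R ^ 2 * ∑ i, v i ^ 2) (v : n → ℝ) :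
    v ⬝ᵥ M *ᵥ v ≤ R * ∑ i, v i ^ 2 := by
  refine le_of_sq_le_sq ?_ (by positivity)
  calc (v ⬝ᵥ M *ᵥ v) ^ 2 ≤ (∑ i, v i ^ 2) * ∑ i, (M *ᵥ v) i ^ 2 :=
        Finset.sum_mul_sq_le_sq_mul_sq _ _ _
    _ ≤ (∑ i, v i ^ 2) * (R ^ 2 * ∑ i, v i ^ 2) := by gcongr; exact hM v
    _ = (R * ∑ i, v i ^ 2) ^ 2 := by ring

lemma sum_sq_mulVec_le {M : Matrix n n ℝ} {R : ℝ} (hR : 0 ≤ R) (hsym : M.IsSymm)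
    (hpsd : ∀ v, 0 ≤ v ⬝ᵥ M *ᵥ v) (hM : ∀ v, ∑ i, (M *ᵥ v) i ^ 2 ≤ R ^ 2 * ∑ i, v i ^ 2)
    (v : n → ℝ) : ∑ i, (M *ᵥ v) i ^ 2 ≤ R * (v ⬝ᵥ M *ᵥ v) := by
  set w := M *ᵥ v
  set S := ∑ i, w i ^ 2
  have hvw : v ⬝ᵥ M *ᵥ w = S := by
    rw [hsym.dotProduct_mulVec_comm]; simp [S, w, dotProduct, sq]
  have hquad : ∀ t : ℝ, 0 ≤ (R * S) * (t * t) + (-2 * S) * t + v ⬝ᵥ M *ᵥ v := by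
    intro t
    have h1 := hpsd (t • w - v)
    have h2 := mul_le_mul_of_nonneg_left (dotProduct_mulVec_le_of_sum_sq_mulVec_le hR hM w)
      (mul_self_nonneg t)
    simp only [mulVec_sub, mulVec_smul, dotProduct_sub, sub_dotProduct, dotProduct_smul,
      smul_dotProduct, smul_eq_mul] at h1
    rw [hsym.dotProduct_mulVec_comm w v, hvw] at h1
    nlinarith
  have hdisc := discrim_le_zero hquad
  rw [discrim] at hdisc
  rcases (show 0 ≤ S by positivity).eq_or_lt with hS | hS
  · rw [← hS]; exact mul_nonneg hR (hpsd v)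
  · nlinarith

lemma mul_sum_sq_le_dotProduct_mulVec {M : Matrix n n ℝ} (hM : ∀ v, 0 ≤ v ⬝ᵥ M *ᵥ v) {β : ℝ}
    (hβ : β ≤ sInf {y : ℝ | ∃ x : n → ℝ, (∑ i, x i ^ 2) = 1 ∧ (∑ i, x i) = 0 ∧
      y = x ⬝ᵥ M *ᵥ x})
    {z : n → ℝ} (hz : ∑ i, z i = 0) : β * ∑ i, z i ^ 2 ≤ z ⬝ᵥ M *ᵥ z := by
  rcases (Finset.sum_nonneg fun i _ => sq_nonneg (z i)).eq_or_lt with h0 | hpos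
  · rw [← h0, mul_zero]; exact hM z
  set r := √(∑ i, z i ^ 2)
  have hr : 0 < r := Real.sqrt_pos.2 hpos
  have hr2 : r ^ 2 = ∑ i, z i ^ 2 := Real.sq_sqrt hpos.le
  have hmem : (r⁻¹ • z) ⬝ᵥ M *ᵥ (r⁻¹ • z) ∈ {y : ℝ | ∃ x : n → ℝ, (∑ i, x i ^ 2) = 1 ∧
      (∑ i, x i) = 0 ∧ y = x ⬝ᵥ M *ᵥ x} := by
    refine ⟨r⁻¹ • z, ?_, ?_, rfl⟩
    · simp only [Pi.smul_apply, smul_eq_mul, mul_pow, ← Finset.mul_sum, ← hr2]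
      field_simp
    · simp [← Finset.mul_sum, hz]
  have hle := hβ.trans (csInf_le ⟨0, fun y ⟨x, _, _, hy⟩ => hy ▸ hM x⟩ hmem)
  simp only [mulVec_smul, dotProduct_smul, smul_dotProduct, smul_eq_mul] at hle
  rw [← hr2]
  calc β * r ^ 2 ≤ r⁻¹ * (r⁻¹ * z ⬝ᵥ M *ᵥ z) * r ^ 2 := by gcongr
    _ = z ⬝ᵥ M *ᵥ z := by field_simp

end QuadraticForm

lemma sum_sub_mean_eq_zero {n : Type*} [Fintype n] (v : n → ℝ) :
    ∑ i, (v i - 1 / (Fintype.card n : ℝ) * ∑ j, v j) = 0 := by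
  rcases isEmpty_or_nonempty n with hn | hn
  · simp
  rw [Finset.sum_sub_distrib, Finset.sum_const, Finset.card_univ, nsmul_eq_mul]
  field_simp
  ring

lemma sq_intervalIntegral_le {f : ℝ → ℝ} {a b : ℝ} (hab : a ≤ b)
    (hf : IntervalIntegrable f volume a b)
    (hf2 : IntervalIntegrable (fun t => f t ^ 2) volume a b) :
    (∫ t in a..b, f t) ^ 2 ≤ (b - a) * ∫ t in a..b, f t ^ 2 := by
  have hquad (c : ℝ) :
      0 ≤ (b - a) * (c * c) + (2 * ∫ t in a..b, f t) * c + ∫ t in a..b, f t ^ 2 := by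
    have hexp : ∫ t in a..b, (c + f t) ^ 2 =
        (b - a) * (c * c) + (2 * ∫ t in a..b, f t) * c + ∫ t in a..b, f t ^ 2 := by
      simp_rw [add_sq]
      rw [integral_add (intervalIntegrable_const.add (hf.const_mul _)) hf2,
        integral_add intervalIntegrable_const (hf.const_mul _), integral_const_mul,
        integral_const]
      simp only [smul_eq_mul]; ring
    exact hexp ▸ integral_nonneg hab fun t _ => sq_nonneg _
  have := discrim_le_zero hquad
  rw [discrim] at this
  linarith

section Continuity

variable {n : Type*} [Fintype n] {G : ℝ → Matrix n n ℝ} {u v : ℝ → n → ℝ} {s : Set ℝ}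

lemma ContinuousOn.matrix_mulVec (hG : ContinuousOn G s) (hv : ContinuousOn v s) :
    ContinuousOn (fun t => G t *ᵥ v t) s := by
  rw [continuousOn_iff_continuous_domRestrict] at *
  exact hG.matrix_mulVec hv

lemma ContinuousOn.dotProduct_mulVec (hG : ContinuousOn G s) (hu : ContinuousOn u s)
    (hv : ContinuousOn v s) : ContinuousOn (fun t => u t ⬝ᵥ G t *ᵥ v t) s := by
  rw [continuousOn_iff_continuous_domRestrict] at *
  exact hu.dotProduct (hG.matrix_mulVec hv)

end Continuity

lemma dotProduct_of_integral_mulVec {n : Type*} [Fintype n] {G : ℝ → Matrix n n ℝ} {a b : ℝ}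
    (hG : ∀ i j, IntervalIntegrable (fun t => G t i j) volume a b) (c : ℝ) (v : n → ℝ) :
    v ⬝ᵥ (Matrix.of fun i j => c * ∫ t in a..b, G t i j) *ᵥ v =
      c * ∫ t in a..b, v ⬝ᵥ G t *ᵥ v := by
  have hexpand (M : Matrix n n ℝ) : v ⬝ᵥ M *ᵥ v = ∑ i, ∑ j, v i * v j * M i j := by
    simp only [dotProduct, mulVec, Finset.mul_sum]
    exact Finset.sum_congr rfl fun i _ => Finset.sum_congr rfl fun j _ => by ring
  have hint (i j : n) : IntervalIntegrable (fun t => v i * v j * G t i j) volume a b :=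
    (hG i j).const_mul _
  simp only [hexpand, of_apply]
  rw [integral_finsetSum fun i _ => by
      simpa only [Finset.sum_fn] using IntervalIntegrable.sum Finset.univ fun j _ => hint i j,
    Finset.mul_sum]
  refine Finset.sum_congr rfl fun i _ => ?_
  rw [integral_finsetSum fun j _ => hint i j, Finset.mul_sum]
  refine Finset.sum_congr rfl fun j _ => ?_
  rw [integral_const_mul]
  ring

section Flow

variable {n : Type*} [Fintype n]

def IsSolutionOn (G : ℝ → Matrix n n ℝ) (x : ℝ → n → ℝ) (s : Set ℝ) : Prop :=
  ∀ i, ∀ t ∈ s, HasDerivAt (fun u => x u i) (-(G t *ᵥ x t) i) t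

namespace IsSolutionOn

variable {G : ℝ → Matrix n n ℝ} {x : ℝ → n → ℝ} {s : Set ℝ} {a b : ℝ}

lemma mono (hx : IsSolutionOn G x s) {s' : Set ℝ} (h : s' ⊆ s) : IsSolutionOn G x s' :=
  fun i t ht => hx i t (h ht)

lemma continuousOn (hx : IsSolutionOn G x s) : ContinuousOn x s :=
  fun t ht => (continuousAt_pi.2 fun i => (hx i t ht).continuousAt).continuousWithinAt

lemma sub_const (hx : IsSolutionOn G x s) (hrow : ∀ t ∈ s, ∀ i, ∑ j, G t i j = 0) (c : ℝ) :
    IsSolutionOn G (fun t i => x t i - c) s := by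
  intro i t ht
  have hc : (G t *ᵥ fun j => x t j - c) i = (G t *ᵥ x t) i := by
    simp [mulVec, dotProduct, mul_sub, Finset.sum_sub_distrib, ← Finset.sum_mul, hrow t ht i]
  rw [hc]
  exact (hx i t ht).sub_const c

lemma sum_eq (hx : IsSolutionOn G x (Icc a b)) (hcol : ∀ t ∈ Icc a b, ∀ j, ∑ i, G t i j = 0)
    (hab : a ≤ b) : ∑ i, x b i = ∑ i, x a i := by
  have hderiv : ∀ t ∈ Icc a b, HasDerivAt (fun u => ∑ i, x u i) 0 t := by
    intro t ht
    refine (HasDerivAt.fun_sum (u := Finset.univ) fun i _ => hx i t ht).congr_deriv ?_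
    rw [Finset.sum_neg_distrib, ← one_dotProduct, dotProduct_mulVec]
    have h1G : (1 : n → ℝ) ᵥ* G t = 0 := by ext j; simp [vecMul, dotProduct, hcol t ht]
    simp [h1G]
  exact constant_of_has_deriv_right_zero
    (fun t ht => (hderiv t ht).continuousAt.continuousWithinAt)
    (fun t ht => (hderiv t (Ico_subset_Icc_self ht)).hasDerivWithinAt) b ⟨hab, le_rfl⟩

lemma hasDerivAt_sum_sq (hx : IsSolutionOn G x s) {t : ℝ} (ht : t ∈ s) :
    HasDerivAt (fun u => ∑ i, x u i ^ 2) (-2 * (x t ⬝ᵥ G t *ᵥ x t)) t := by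
  refine (HasDerivAt.fun_sum (u := Finset.univ) fun i _ => (hx i t ht).pow 2).congr_deriv ?_
  simp only [dotProduct, Finset.mul_sum]
  refine Finset.sum_congr rfl fun i _ => ?_
  push_cast; ring

lemma antitoneOn_sum_sq (hx : IsSolutionOn G x s) (hs : Convex ℝ s)
    (hpsd : ∀ t ∈ s, ∀ v, 0 ≤ v ⬝ᵥ G t *ᵥ v) : AntitoneOn (fun t => ∑ i, x t i ^ 2) s :=
  antitoneOn_of_hasDerivWithinAt_nonpos hs
    (fun t ht => (hx.hasDerivAt_sum_sq ht).continuousAt.continuousWithinAt)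
    (fun t ht => (hx.hasDerivAt_sum_sq (interior_subset ht)).hasDerivWithinAt)
    (fun t ht => by nlinarith [hpsd t (interior_subset ht) (x t)])

lemma sum_sq_eq_sub_integral (hx : IsSolutionOn G x (Icc a b)) (hG : ContinuousOn G (Icc a b))
    (hab : a ≤ b) :
    ∑ i, x b i ^ 2 = ∑ i, x a i ^ 2 - 2 * ∫ t in a..b, x t ⬝ᵥ G t *ᵥ x t := by
  rw [← uIcc_of_le hab] at hx hG
  have := integral_eq_sub_of_hasDerivAt (fun t ht => hx.hasDerivAt_sum_sq ht)
    ((hG.dotProduct_mulVec hx.continuousOn hx.continuousOn).intervalIntegrable.const_mul (-2))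
  rw [integral_const_mul] at this
  linarith

end IsSolutionOn

end Flow

section Excitation

variable {n : Type*} [Fintype n] {G : ℝ → Matrix n n ℝ} {x : ℝ → n → ℝ} {a b R : ℝ}

lemma IsSolutionOn.sum_sq_sub_le (hx : IsSolutionOn G x (Icc a b)) (hG : ContinuousOn G (Icc a b))
    (hR : 0 ≤ R) (hsym : ∀ t ∈ Icc a b, (G t).IsSymm)
    (hpsd : ∀ t ∈ Icc a b, ∀ v, 0 ≤ v ⬝ᵥ G t *ᵥ v)
    (hnorm : ∀ t ∈ Icc a b, ∀ v, ∑ i, (G t *ᵥ v) i ^ 2 ≤ R ^ 2 * ∑ i, v i ^ 2) (hab : a ≤ b) :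
    ∑ i, (x a i - x b i) ^ 2 ≤ (b - a) * R * ∫ t in a..b, x t ⬝ᵥ G t *ᵥ x t := by
  have hGx : ContinuousOn (fun t => G t *ᵥ x t) (uIcc a b) :=
    uIcc_of_le hab ▸ hG.matrix_mulVec hx.continuousOn
  have hGxi (i : n) : ContinuousOn (fun t => (G t *ᵥ x t) i) (uIcc a b) :=
    (continuous_apply i).comp_continuousOn hGx
  have hFTC (i : n) : x a i - x b i = ∫ t in a..b, (G t *ᵥ x t) i := by
    rw [← uIcc_of_le hab] at hx
    rw [integral_eq_sub_of_hasDerivAt (f := fun t => -x t i)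
      (fun t ht => by simpa using (hx i t ht).fun_neg) (hGxi i).intervalIntegrable]
    ring
  calc ∑ i, (x a i - x b i) ^ 2
      ≤ ∑ i, (b - a) * ∫ t in a..b, (G t *ᵥ x t) i ^ 2 := by
        refine Finset.sum_le_sum fun i _ => hFTC i ▸ ?_
        exact sq_intervalIntegral_le hab (hGxi i).intervalIntegrable
          ((hGxi i).pow 2).intervalIntegrable
    _ = (b - a) * ∫ t in a..b, ∑ i, (G t *ᵥ x t) i ^ 2 := by
        rw [← Finset.mul_sum, integral_finsetSum (f := fun i t => (G t *ᵥ x t) i ^ 2)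
          fun i _ => ((hGxi i).pow 2).intervalIntegrable]
    _ ≤ (b - a) * ∫ t in a..b, R * (x t ⬝ᵥ G t *ᵥ x t) := by
        gcongr
        refine integral_mono_on hab ?_ ?_ fun t ht =>
          sum_sq_mulVec_le hR (hsym t ht) (hpsd t ht) (hnorm t ht) (x t)
        · exact (continuousOn_finsetSum _ fun i _ => (hGxi i).pow 2).intervalIntegrable
        · exact ((uIcc_of_le hab ▸ hG.dotProduct_mulVec hx.continuousOn
            hx.continuousOn).intervalIntegrable).const_mul R
    _ = (b - a) * R * ∫ t in a..b, x t ⬝ᵥ G t *ᵥ x t := by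
        rw [integral_const_mul, mul_assoc]

lemma IsSolutionOn.integral_quadForm_initial_le (hx : IsSolutionOn G x (Icc a b))
    (hG : ContinuousOn G (Icc a b)) (hR : 0 ≤ R) (hsym : ∀ t ∈ Icc a b, (G t).IsSymm)
    (hpsd : ∀ t ∈ Icc a b, ∀ v, 0 ≤ v ⬝ᵥ G t *ᵥ v)
    (hnorm : ∀ t ∈ Icc a b, ∀ v, ∑ i, (G t *ᵥ v) i ^ 2 ≤ R ^ 2 * ∑ i, v i ^ 2) (hab : a ≤ b) :
    ∫ t in a..b, x a ⬝ᵥ G t *ᵥ x a ≤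
      2 * (1 + ((b - a) * R) ^ 2) * ∫ t in a..b, x t ⬝ᵥ G t *ᵥ x t := by
  set D := ∫ t in a..b, x t ⬝ᵥ G t *ᵥ x t
  have hq : ContinuousOn (fun t => x t ⬝ᵥ G t *ᵥ x t) (Icc a b) :=
    hG.dotProduct_mulVec hx.continuousOn hx.continuousOn
  have hdev : ∀ s ∈ Icc a b, ∑ i, (x a i - x s i) ^ 2 ≤ (b - a) * R * D := by
    intro s hs
    have hsub : Icc a s ⊆ Icc a b := Icc_subset_Icc_right hs.2
    calc ∑ i, (x a i - x s i) ^ 2 ≤ (s - a) * R * ∫ t in a..s, x t ⬝ᵥ G t *ᵥ x t :=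
          (hx.mono hsub).sum_sq_sub_le (hG.mono hsub) hR (fun t ht => hsym t (hsub ht))
            (fun t ht => hpsd t (hsub ht)) (fun t ht => hnorm t (hsub ht)) hs.1
      _ ≤ (b - a) * R * D := by
          gcongr
          · exact integral_nonneg hs.1 fun t ht => hpsd t (hsub ht) _
          · exact hs.2
          · refine integral_mono_interval le_rfl hs.1 hs.2 ?_ (hq.intervalIntegrable_of_Icc hab)
            exact ae_restrict_of_forall_mem measurableSet_Ioc
              fun t ht => hpsd t (Ioc_subset_Icc_self ht) _
  have hpointwise : ∀ t ∈ Icc a b,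
      x a ⬝ᵥ G t *ᵥ x a ≤ 2 * (x t ⬝ᵥ G t *ᵥ x t + (b - a) * R ^ 2 * D) := by
    intro t ht
    have hsplit := add_dotProduct_mulVec_add_le (hpsd t ht) (x t) (x a - x t)
    have herr := dotProduct_mulVec_le_of_sum_sq_mulVec_le hR (hnorm t ht) (x a - x t)
    simp only [add_sub_cancel, Pi.sub_apply] at hsplit herr
    nlinarith [hdev t ht]
  calc ∫ t in a..b, x a ⬝ᵥ G t *ᵥ x a
      ≤ ∫ t in a..b, 2 * (x t ⬝ᵥ G t *ᵥ x t + (b - a) * R ^ 2 * D) :=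
        integral_mono_on hab
          ((hG.dotProduct_mulVec continuousOn_const continuousOn_const).intervalIntegrable_of_Icc
            hab)
          (((hq.intervalIntegrable_of_Icc hab).add intervalIntegrable_const).const_mul 2) hpointwise
    _ = 2 * (1 + ((b - a) * R) ^ 2) * D := by
        rw [integral_const_mul, integral_add (hq.intervalIntegrable_of_Icc hab)
          intervalIntegrable_const, integral_const, smul_eq_mul]
        ring

lemma IsSolutionOn.one_add_div_mul_sum_sq_le (hx : IsSolutionOn G x (Icc a b))
    (hG : ContinuousOn G (Icc a b)) (hR : 0 ≤ R) (hsym : ∀ t ∈ Icc a b, (G t).IsSymm)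
    (hpsd : ∀ t ∈ Icc a b, ∀ v, 0 ≤ v ⬝ᵥ G t *ᵥ v)
    (hnorm : ∀ t ∈ Icc a b, ∀ v, ∑ i, (G t *ᵥ v) i ^ 2 ≤ R ^ 2 * ∑ i, v i ^ 2) (hab : a ≤ b)
    {μ : ℝ} (hμ : μ * ∑ i, x a i ^ 2 ≤ ∫ t in a..b, x a ⬝ᵥ G t *ᵥ x a) :
    (1 + μ / (1 + ((b - a) * R) ^ 2)) * ∑ i, x b i ^ 2 ≤ ∑ i, x a i ^ 2 := by
  set θ := μ / (1 + ((b - a) * R) ^ 2)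
  have hD : 0 ≤ ∫ t in a..b, x t ⬝ᵥ G t *ᵥ x t := integral_nonneg hab fun t ht => hpsd t ht _
  have hV := hx.sum_sq_eq_sub_integral hG hab
  have hexc := hx.integral_quadForm_initial_le hG hR hsym hpsd hnorm hab
  have hθ : θ * ∑ i, x a i ^ 2 ≤ 2 * ∫ t in a..b, x t ⬝ᵥ G t *ᵥ x t := by
    rw [div_mul_eq_mul_div, div_le_iff₀ (by positivity)]
    nlinarith
  have hVb : 0 ≤ ∑ i, x b i ^ 2 := by positivity
  -- `θ V b ≤ θ V a` when `θ ≥ 0`, and `θ V b ≤ 0` otherwise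
  rcases le_or_gt 0 θ with hθ0 | hθ0 <;> nlinarith

lemma IsSolutionOn.one_add_div_mul_sum_sq_le_of_le_sInf (hx : IsSolutionOn G x (Icc a b))
    (hG : ContinuousOn G (Icc a b)) (hR : 0 ≤ R) (hsym : ∀ t ∈ Icc a b, (G t).IsSymm)
    (hpsd : ∀ t ∈ Icc a b, ∀ v, 0 ≤ v ⬝ᵥ G t *ᵥ v)
    (hnorm : ∀ t ∈ Icc a b, ∀ v, ∑ i, (G t *ᵥ v) i ^ 2 ≤ R ^ 2 * ∑ i, v i ^ 2)
    {h β : ℝ} (hh : 0 < h) (hba : b - a = h) (hsum : ∑ i, x a i = 0)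
    (hβ : β ≤ sInf {y : ℝ | ∃ v : n → ℝ, (∑ i, v i ^ 2) = 1 ∧ (∑ i, v i) = 0 ∧
      y = v ⬝ᵥ (Matrix.of fun i j => (1 / h) * ∫ t in a..b, G t i j) *ᵥ v}) :
    (1 + h * β / (1 + (h * R) ^ 2)) * ∑ i, x b i ^ 2 ≤ ∑ i, x a i ^ 2 := by
  have hab : a ≤ b := by linarith
  have hGint (i j : n) : IntervalIntegrable (fun t => G t i j) volume a b :=
    ((continuous_apply j).comp_continuousOn
      ((continuous_apply i).comp_continuousOn hG)).intervalIntegrable_of_Icc hab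
  have hexc := mul_sum_sq_le_dotProduct_mulVec (fun v => ?_) hβ hsum
  · rw [dotProduct_of_integral_mulVec hGint, ← mul_le_mul_iff_of_pos_left hh, ← mul_assoc,
      ← mul_assoc, mul_one_div_cancel hh.ne', one_mul] at hexc
    simpa only [hba] using hx.one_add_div_mul_sum_sq_le hG hR hsym hpsd hnorm hab hexc
  · rw [dotProduct_of_integral_mulVec hGint]
    exact mul_nonneg (by positivity) (integral_nonneg hab fun t ht => hpsd t ht v)

end Excitation

lemma le_mul_exp_of_antitoneOn_of_mul_le {f : ℝ → ℝ} {h ρ : ℝ} (hh : 0 < h) (hρ : 1 < ρ)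
    (hf : AntitoneOn f (Ici 0)) (hf0 : 0 ≤ f 0)
    (hstep : ∀ k : ℕ, ρ * f ((k + 1) * h) ≤ f (k * h)) {t : ℝ} (ht : 0 ≤ t) :
    f t ≤ ρ * exp (-(log ρ / h) * t) * f 0 := by
  have hpow (k : ℕ) : ρ ^ k * f (k * h) ≤ f 0 := by
    induction k with
    | zero => simp
    | succ k ih =>
      calc ρ ^ (k + 1) * f ((k + 1 : ℕ) * h) = ρ ^ k * (ρ * f ((k + 1) * h)) := by
            push_cast; ring
        _ ≤ ρ ^ k * f (k * h) := by gcongr; exact hstep k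
        _ ≤ f 0 := ih
  set k := ⌊t / h⌋₊
  have hkt : k * h ≤ t := (le_div_iff₀ hh).1 (Nat.floor_le (by positivity))
  have htk : t / h ≤ k + 1 := (Nat.lt_floor_add_one _).le
  have hlog : 0 < log ρ := log_pos hρ
  have hρk : ρ ^ k = exp (k * log ρ) := by rw [exp_nat_mul, exp_log (by linarith)]
  calc f t ≤ f (k * h) := hf (mem_Ici.2 (by positivity)) ht hkt
    _ ≤ exp (-(k * log ρ)) * f 0 := by
        rw [Real.exp_neg, ← hρk, inv_mul_eq_div, le_div_iff₀ (by positivity), mul_comm]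
        exact hpow k
    _ ≤ exp (log ρ + -(log ρ / h) * t) * f 0 := by
        gcongr
        have : -(log ρ / h) * t = -(log ρ * (t / h)) := by ring
        nlinarith
    _ = ρ * exp (-(log ρ / h) * t) * f 0 := by rw [exp_add, exp_log (by linarith)]

theorem stmt8_general
    (m : ℕ) (R : ℝ) (hR : 0 ≤ R)
    (G : ℝ → Matrix (Fin m) (Fin m) ℝ)
    (hGc : ∀ i j, ContinuousOn (fun t => G t i j) (Set.Ici 0))
    (hsym : ∀ t, 0 ≤ t → (G t).IsSymm)
    (hpsd : ∀ t, 0 ≤ t → ∀ x : Fin m → ℝ, 0 ≤ x ⬝ᵥ (G t).mulVec x)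
    (hrow : ∀ t, 0 ≤ t → ∀ i, ∑ j, G t i j = 0)
    -- operator norm bound `‖G(t)‖ ≤ R` (Euclidean operator norm)
    (hnorm : ∀ t, 0 ≤ t → ∀ x : Fin m → ℝ,
      ∑ i, ((G t).mulVec x i) ^ 2 ≤ R ^ 2 * ∑ i, (x i) ^ 2)
    (h : ℝ) (hh : 0 < h)
    -- `β_k = min{ xᵀ·((1/h)∫_{kh}^{(k+1)h} G)·x : ‖x‖ = 1, Σᵢ xᵢ = 0 }`
    (β : ℕ → ℝ)
    (hβ : ∀ k : ℕ, β k =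
      sInf {y : ℝ | ∃ x : Fin m → ℝ, (∑ i, x i ^ 2) = 1 ∧ (∑ i, x i) = 0 ∧
        y = x ⬝ᵥ (Matrix.of fun i j =>
          (1 / h) * ∫ τ in ((k : ℝ) * h)..(((k : ℝ) + 1) * h), G τ i j).mulVec x})
    (βhat : ℝ) (hβhat : 0 < βhat) (hlb : ∀ k : ℕ, βhat ≤ β k) :
    ∃ C α : ℝ, 0 < C ∧ 0 < α ∧
      ∀ x : ℝ → Fin m → ℝ,
        (∀ (i : Fin m) (t : ℝ), 0 ≤ t →
          HasDerivAt (fun s => x s i) (-((G t).mulVec (x t) i)) t) →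
        ∀ t, 0 ≤ t →
          Real.sqrt (∑ i, (x t i - (1 / (m : ℝ)) * ∑ j, x 0 j) ^ 2) ≤
            C * Real.exp (-α * t) *
              Real.sqrt (∑ i, (x 0 i - (1 / (m : ℝ)) * ∑ j, x 0 j) ^ 2) := by
  set θ := h * βhat / (1 + (h * R) ^ 2)
  have hρ : 1 < √(1 + θ) :=
    (lt_sqrt zero_le_one).2 (by simp only [one_pow]; linarith [show 0 < θ by positivity])
  refine ⟨√(1 + θ), log √(1 + θ) / h, by positivity, div_pos (log_pos hρ) hh,
    fun x hx t ht => ?_⟩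
  have hG : ContinuousOn G (Ici 0) :=
    continuousOn_pi.2 fun i => continuousOn_pi.2 fun j => hGc i j
  have hcol (t : ℝ) (ht : 0 ≤ t) (j : Fin m) : ∑ i, G t i j = 0 :=
    (Finset.sum_congr rfl fun i _ => (hsym t ht).apply j i).trans (hrow t ht j)
  set c := 1 / (m : ℝ) * ∑ j, x 0 j
  have hy : IsSolutionOn G (fun t i => x t i - c) (Ici 0) :=
    IsSolutionOn.sub_const (hx : IsSolutionOn G x (Ici 0)) hrow c
  have hmean (s : ℝ) (hs : 0 ≤ s) : ∑ i, (x s i - c) = 0 := by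
    rw [(hy.mono Icc_subset_Ici_self).sum_eq (fun t ht => hcol t ht.1) hs]
    simpa [c] using sum_sub_mean_eq_zero (x 0)
  have hstep (k : ℕ) : √(1 + θ) * √(∑ i, (x ((k + 1) * h) i - c) ^ 2) ≤
      √(∑ i, (x (k * h) i - c) ^ 2) := by
    have hsub : Icc ((k : ℝ) * h) ((k + 1) * h) ⊆ Ici 0 := fun t ht => le_trans (by positivity) ht.1
    rw [← sqrt_mul (by positivity)]
    exact sqrt_le_sqrt ((hy.mono hsub).one_add_div_mul_sum_sq_le_of_le_sInf (hG.mono hsub) hR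
      (fun t ht => hsym t (hsub ht)) (fun t ht => hpsd t (hsub ht))
      (fun t ht => hnorm t (hsub ht)) hh (by ring) (hmean _ (by positivity))
      ((hlb k).trans (hβ k).le))
  exact le_mul_exp_of_antitoneOn_of_mul_le (f := fun t => √(∑ i, (x t i - c) ^ 2)) hh hρ
    (fun s hs t ht hst => sqrt_le_sqrt (hy.antitoneOn_sum_sq (convex_Ici 0) hpsd hs ht hst))
    (sqrt_nonneg _) hstep ht

theorem stmt8
    (m : ℕ) (hm : 1 ≤ m) (R : ℝ) (hR : 0 ≤ R)
    (G : ℝ → Matrix (Fin m) (Fin m) ℝ)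
    (hGc : ∀ i j, ContinuousOn (fun t => G t i j) (Set.Ici 0))
    (hsym : ∀ t, 0 ≤ t → (G t).IsSymm)
    (hpsd : ∀ t, 0 ≤ t → ∀ x : Fin m → ℝ, 0 ≤ x ⬝ᵥ (G t).mulVec x)
    (hrow : ∀ t, 0 ≤ t → ∀ i, ∑ j, G t i j = 0)
    -- operator norm bound `‖G(t)‖ ≤ R` (Euclidean operator norm)
    (hnorm : ∀ t, 0 ≤ t → ∀ x : Fin m → ℝ,
      ∑ i, ((G t).mulVec x i) ^ 2 ≤ R ^ 2 * ∑ i, (x i) ^ 2)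
    (h : ℝ) (hh : 0 < h)
    -- `β_k = min{ xᵀ·((1/h)∫_{kh}^{(k+1)h} G)·x : ‖x‖ = 1, Σᵢ xᵢ = 0 }`
    (β : ℕ → ℝ)
    (hβ : ∀ k : ℕ, β k =
      sInf {y : ℝ | ∃ x : Fin m → ℝ, (∑ i, x i ^ 2) = 1 ∧ (∑ i, x i) = 0 ∧
        y = x ⬝ᵥ (Matrix.of fun i j =>
          (1 / h) * ∫ τ in ((k : ℝ) * h)..(((k : ℝ) + 1) * h), G τ i j).mulVec x})
    (βhat : ℝ) (hβhat : 0 < βhat) (hlb : ∀ k : ℕ, βhat ≤ β k) :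
    ∃ C α : ℝ, 0 < C ∧ 0 < α ∧
      ∀ x : ℝ → Fin m → ℝ,
        (∀ (i : Fin m) (t : ℝ), 0 ≤ t →
          HasDerivAt (fun s => x s i) (-((G t).mulVec (x t) i)) t) →
        ∀ t, 0 ≤ t →
          Real.sqrt (∑ i, (x t i - (1 / (m : ℝ)) * ∑ j, x 0 j) ^ 2) ≤
            C * Real.exp (-α * t) *
              Real.sqrt (∑ i, (x 0 i - (1 / (m : ℝ)) * ∑ j, x 0 j) ^ 2) :=
  stmt8_general m R hR G hGc hsym hpsd hrow hnorm h hh β hβ βhat hβhat hlb
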